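/- arXiv:2503.02342 — 4 statements merged into one kernel-verified Lean document; each statement's English description precedes it below -/
import Mathlib

section
/- Let ϑ = ϑ₀ ⊗ ϑ₁ with ϑ₀ supported in {τ : 0 < τ₁ ≤ τ ≤ τ₂} and ϑ₁ supported in {x ∈ ℝ³ : |x| ≤ r}, and let σ be supported in {x : 0 < R ≤ |x| ≤ R̄}. If R > (τ₂² − τ₁²)/(2τ₁) + (1 + τ₂²/τ₁²)·r, then the supports of the two charge densities x ↦ θ(x₀)(x₀/√(x₀²−|x|²)) ϑ(√(x₀²−|x|²), x) and x ↦ θ(x₀)(x₀/√(x₀²−|x|²)) (ϑ ⋆ σ)(√(x₀²−|x|²), x) are spacelike separated, i.e., any point in one support differs from any point in the other by a spacelike vector. -/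
noncomputable section

abbrev E3 : Type := EuclideanSpace ℝ (Fin 3)

set_option maxHeartbeats 1000000 in
/-- Key polynomial inequality. -/
lemma key_ineq (τ₁ τ₂ r R s s' α ρ : ℝ) (hτ₁ : 0 < τ₁)
    (hs1 : τ₁ ≤ s) (hs2 : s ≤ τ₂) (hs1' : τ₁ ≤ s') (hs2' : s' ≤ τ₂)
    (hα0 : 0 ≤ α) (hαr : α ≤ r) (hr : 0 ≤ r) (hρ : R - r ≤ ρ)
    (hsep2 : τ₁ ^ 2 * (τ₂ ^ 2 - τ₁ ^ 2) + 2 * τ₁ * (τ₁ ^ 2 + τ₂ ^ 2) * r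
        < 2 * τ₁ ^ 3 * R) :
    (s ^ 2 + s' ^ 2 + 2 * ρ * α) ^ 2 < 4 * (s ^ 2 + α ^ 2) * (s' ^ 2 + ρ ^ 2) := by
  have hττ : τ₁ ≤ τ₂ := le_trans hs1 hs2
  have hτ₂ : 0 < τ₂ := lt_of_lt_of_le hτ₁ hττ
  have hc : 0 ≤ τ₂ ^ 2 - τ₁ ^ 2 := by nlinarith
  have hRr : r < R := by
    nlinarith [mul_nonneg (sq_nonneg τ₁) hc,
      mul_nonneg (mul_nonneg hτ₁.le (sq_nonneg τ₂)) hr, pow_pos hτ₁ 3]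
  have hρ0 : 0 < ρ := by linarith
  have hss : τ₁ ^ 2 ≤ s ^ 2 := by nlinarith
  have hss2 : s ^ 2 ≤ τ₂ ^ 2 := by nlinarith
  have hss' : τ₁ ^ 2 ≤ s' ^ 2 := by nlinarith
  have hss2' : s' ^ 2 ≤ τ₂ ^ 2 := by nlinarith
  -- X bound
  have hX : τ₂ ^ 2 - τ₁ ^ 2 < 2 * τ₁ * (ρ - α) := by
    have h1 : τ₁ ^ 2 * (τ₂ ^ 2 - τ₁ ^ 2) < τ₁ ^ 2 * (2 * τ₁ * (ρ - α)) := by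
      nlinarith [mul_le_mul_of_nonneg_left hρ (by positivity : (0:ℝ) ≤ 2 * τ₁ ^ 3),
        mul_le_mul_of_nonneg_left hαr (by positivity : (0:ℝ) ≤ 2 * τ₁ ^ 3),
        mul_nonneg (mul_nonneg (by positivity : (0:ℝ) ≤ 2 * τ₁) hc) hr]
    exact lt_of_mul_lt_mul_left h1 (sq_nonneg τ₁)
  -- Y bound
  have t1 : (R - r) * τ₁ ^ 2 ≤ ρ * s ^ 2 := mul_le_mul hρ hss (sq_nonneg τ₁) hρ0.le
  have t2 : α * s' ^ 2 ≤ r * τ₂ ^ 2 := mul_le_mul hαr hss2' (sq_nonneg s') hr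
  have hY : τ₁ ^ 2 * (τ₂ ^ 2 - τ₁ ^ 2) < 2 * τ₁ * (ρ * s ^ 2 - α * s' ^ 2) := by
    nlinarith [mul_le_mul_of_nonneg_left t1 (by positivity : (0:ℝ) ≤ 2 * τ₁),
      mul_le_mul_of_nonneg_left t2 (by positivity : (0:ℝ) ≤ 2 * τ₁),
      mul_nonneg (mul_nonneg (by positivity : (0:ℝ) ≤ 2 * τ₁) hc) hr]
  have hXY : (τ₂ ^ 2 - τ₁ ^ 2) * (τ₁ ^ 2 * (τ₂ ^ 2 - τ₁ ^ 2))
      < (2 * τ₁ * (ρ - α)) * (2 * τ₁ * (ρ * s ^ 2 - α * s' ^ 2)) :=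
    mul_lt_mul'' hX hY hc (by positivity)
  have hXY2 : (τ₂ ^ 2 - τ₁ ^ 2) ^ 2 < 4 * (ρ - α) * (ρ * s ^ 2 - α * s' ^ 2) := by
    have h4 : τ₁ ^ 2 * ((τ₂ ^ 2 - τ₁ ^ 2) ^ 2)
        < τ₁ ^ 2 * (4 * (ρ - α) * (ρ * s ^ 2 - α * s' ^ 2)) := by nlinarith [hXY]
    exact lt_of_mul_lt_mul_left h4 (sq_nonneg τ₁)
  have habs : (s ^ 2 - s' ^ 2) ^ 2 ≤ (τ₂ ^ 2 - τ₁ ^ 2) ^ 2 := by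
    nlinarith [mul_nonneg (by linarith : (0:ℝ) ≤ τ₂ ^ 2 - τ₁ ^ 2 - s ^ 2 + s' ^ 2)
      (by linarith : (0:ℝ) ≤ τ₂ ^ 2 - τ₁ ^ 2 + s ^ 2 - s' ^ 2)]
  have hid : 4 * (s ^ 2 + α ^ 2) * (s' ^ 2 + ρ ^ 2) - (s ^ 2 + s' ^ 2 + 2 * ρ * α) ^ 2
      = 4 * (ρ - α) * (ρ * s ^ 2 - α * s' ^ 2) - (s ^ 2 - s' ^ 2) ^ 2 := by ring
  linarith

set_option maxHeartbeats 1000000 in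
/-- Support separation of the two charge densities: with `ϑ = ϑ₀ ⊗ ϑ₁` supported in
`[τ₁, τ₂] × {|x| ≤ r}` (with `τ₁ > 0`) and `σ` supported in `{R ≤ |x| ≤ R̄}`, if
`R > (τ₂² − τ₁²)/(2τ₁) + (1 + τ₂²/τ₁²)·r`, then the supports of
`x ↦ θ(x₀)(x₀/√(x²)) ϑ(√(x²), x)` and `x ↦ θ(x₀)(x₀/√(x²)) (ϑ ⋆ σ)(√(x²), x)`
are spacelike separated: any point of one support differs from any point of the
other by a spacelike vector. -/
theorem charge_densities_spacelike_separated
    (τ₁ τ₂ r R Rbar : ℝ) (hτ₁ : 0 < τ₁) (hτ : τ₁ ≤ τ₂) (hr : 0 ≤ r)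
    (hR : 0 < R) (hRbar : R ≤ Rbar)
    (ϑ₀ : ℝ → ℝ) (ϑ₁ σ : E3 → ℝ)
    (hϑ₀ : Function.support ϑ₀ ⊆ Set.Icc τ₁ τ₂)
    (hϑ₁ : Function.support ϑ₁ ⊆ Metric.closedBall 0 r)
    (hσ : Function.support σ ⊆ {y : E3 | R ≤ ‖y‖ ∧ ‖y‖ ≤ Rbar})
    (hsep : R > (τ₂ ^ 2 - τ₁ ^ 2) / (2 * τ₁) + (1 + τ₂ ^ 2 / τ₁ ^ 2) * r)
    (den₁ den₂ : ℝ × E3 → ℝ)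
    (hden₁ : den₁ = fun x => if 0 < x.1 then
        (x.1 / Real.sqrt (x.1 ^ 2 - ‖x.2‖ ^ 2)) *
          ϑ₀ (Real.sqrt (x.1 ^ 2 - ‖x.2‖ ^ 2)) * ϑ₁ x.2
      else 0)
    (hden₂ : den₂ = fun x => if 0 < x.1 then
        (x.1 / Real.sqrt (x.1 ^ 2 - ‖x.2‖ ^ 2)) *
          ϑ₀ (Real.sqrt (x.1 ^ 2 - ‖x.2‖ ^ 2)) * (∫ y : E3, ϑ₁ (x.2 - y) * σ y)
      else 0) :
    ∀ a b : ℝ × E3, den₁ a ≠ 0 → den₂ b ≠ 0 →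
      (a.1 - b.1) ^ 2 < ‖a.2 - b.2‖ ^ 2 := by
  intro a b ha hb
  -- clear the denominators in hsep
  have hsep2 : τ₁ ^ 2 * (τ₂ ^ 2 - τ₁ ^ 2) + 2 * τ₁ * (τ₁ ^ 2 + τ₂ ^ 2) * r
      < 2 * τ₁ ^ 3 * R := by
    have h1 : ((τ₂ ^ 2 - τ₁ ^ 2) / (2 * τ₁) + (1 + τ₂ ^ 2 / τ₁ ^ 2) * r) * (2 * τ₁ ^ 3)
        < R * (2 * τ₁ ^ 3) := by
      exact mul_lt_mul_of_pos_right hsep (by positivity)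
    have h2 : ((τ₂ ^ 2 - τ₁ ^ 2) / (2 * τ₁) + (1 + τ₂ ^ 2 / τ₁ ^ 2) * r) * (2 * τ₁ ^ 3)
        = τ₁ ^ 2 * (τ₂ ^ 2 - τ₁ ^ 2) + 2 * τ₁ * (τ₁ ^ 2 + τ₂ ^ 2) * r := by
      field_simp
    rw [h2] at h1
    linarith
  -- unpack den₁ a ≠ 0
  have hA : 0 < a.1 := by
    by_contra h; rw [hden₁] at ha; simp [h] at ha
  rw [hden₁] at ha; simp only [if_pos hA] at ha
  obtain ⟨hxy, hz⟩ := mul_ne_zero_iff.mp ha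
  obtain ⟨hx, hy⟩ := mul_ne_zero_iff.mp hxy
  have hsIcc := hϑ₀ (Function.mem_support.mpr hy)
  obtain ⟨hs1, hs2⟩ := hsIcc
  have hαr : ‖a.2‖ ≤ r := by
    have := hϑ₁ (Function.mem_support.mpr hz)
    simpa [Metric.mem_closedBall, dist_zero_right] using this
  have hsq_pos : 0 < a.1 ^ 2 - ‖a.2‖ ^ 2 :=
    Real.sqrt_pos.mp (lt_of_lt_of_le hτ₁ hs1)
  have hA2 : (Real.sqrt (a.1 ^ 2 - ‖a.2‖ ^ 2)) ^ 2 = a.1 ^ 2 - ‖a.2‖ ^ 2 :=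
    Real.sq_sqrt hsq_pos.le
  -- unpack den₂ b ≠ 0
  have hB : 0 < b.1 := by
    by_contra h; rw [hden₂] at hb; simp [h] at hb
  rw [hden₂] at hb; simp only [if_pos hB] at hb
  obtain ⟨hxy', hz'⟩ := mul_ne_zero_iff.mp hb
  obtain ⟨hx', hy'⟩ := mul_ne_zero_iff.mp hxy'
  have hsIcc' := hϑ₀ (Function.mem_support.mpr hy')
  obtain ⟨hs1', hs2'⟩ := hsIcc'
  have hsq_pos' : 0 < b.1 ^ 2 - ‖b.2‖ ^ 2 :=
    Real.sqrt_pos.mp (lt_of_lt_of_le hτ₁ hs1')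
  have hB2 : (Real.sqrt (b.1 ^ 2 - ‖b.2‖ ^ 2)) ^ 2 = b.1 ^ 2 - ‖b.2‖ ^ 2 :=
    Real.sq_sqrt hsq_pos'.le
  -- a witness point in the support of σ near b.2
  have hyex : ∃ y : E3, ϑ₁ (b.2 - y) * σ y ≠ 0 := by
    by_contra h
    push_neg at h
    exact hz' (by simp [h])
  obtain ⟨y, hy0⟩ := hyex
  obtain ⟨hϑ1y, hσy⟩ := mul_ne_zero_iff.mp hy0
  have hby : ‖b.2 - y‖ ≤ r := by
    have := hϑ₁ (Function.mem_support.mpr hϑ1y)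
    simpa [Metric.mem_closedBall, dist_zero_right] using this
  have hRy : R ≤ ‖y‖ := (hσ (Function.mem_support.mpr hσy)).1
  have hρ : R - r ≤ ‖b.2‖ := by
    have h1 : ‖y‖ - ‖y - b.2‖ ≤ ‖b.2‖ := by
      simpa using norm_sub_norm_le y (y - b.2)
    have h2 : ‖y - b.2‖ = ‖b.2 - y‖ := norm_sub_rev _ _
    linarith
  -- set names
  set s := Real.sqrt (a.1 ^ 2 - ‖a.2‖ ^ 2) with hs_def
  set s' := Real.sqrt (b.1 ^ 2 - ‖b.2‖ ^ 2) with hs'_def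
  set α := ‖a.2‖ with hα_def
  set ρ := ‖b.2‖ with hρ_def
  have hα0 : 0 ≤ α := norm_nonneg _
  -- key polynomial inequality
  have hkey : (s ^ 2 + s' ^ 2 + 2 * ρ * α) ^ 2
      < 4 * (s ^ 2 + α ^ 2) * (s' ^ 2 + ρ ^ 2) :=
    key_ineq τ₁ τ₂ r R s s' α ρ hτ₁ hs1 hs2 hs1' hs2' hα0 hαr hr hρ hsep2
  have hA2' : a.1 ^ 2 = s ^ 2 + α ^ 2 := by rw [hA2]; ring
  have hB2' : b.1 ^ 2 = s' ^ 2 + ρ ^ 2 := by rw [hB2]; ring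
  -- deduce s² + s'² + 2ρα < 2 a₁ b₁
  have hprod : s ^ 2 + s' ^ 2 + 2 * ρ * α < 2 * (a.1 * b.1) := by
    have h1 : (s ^ 2 + s' ^ 2 + 2 * ρ * α) ^ 2 < (2 * (a.1 * b.1)) ^ 2 := by
      have : (2 * (a.1 * b.1)) ^ 2 = 4 * (s ^ 2 + α ^ 2) * (s' ^ 2 + ρ ^ 2) := by
        rw [show (2 * (a.1 * b.1)) ^ 2 = 4 * (a.1 ^ 2 * b.1 ^ 2) by ring, hA2', hB2']
        ring
      linarith
    have h0 : 0 ≤ s ^ 2 + s' ^ 2 + 2 * ρ * α := by positivity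
    nlinarith [lt_of_pow_lt_pow_left₀ 2 (by positivity : (0:ℝ) ≤ 2 * (a.1 * b.1)) h1]
  -- hence (a₁ − b₁)² < (ρ − α)²
  have hcore : (a.1 - b.1) ^ 2 < (ρ - α) ^ 2 := by nlinarith [hA2', hB2', hprod]
  -- and (ρ − α)² ≤ ‖a₂ − b₂‖²
  have hρα0 : 0 ≤ ρ - α := by
    have hc : 0 ≤ τ₂ ^ 2 - τ₁ ^ 2 := by nlinarith
    have h2r : 2 * r < R := by
      nlinarith [mul_nonneg (sq_nonneg τ₁) hc,
        mul_nonneg (mul_nonneg hτ₁.le hr) hc, pow_pos hτ₁ 3]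
    linarith
  have hle : ρ - α ≤ ‖a.2 - b.2‖ := by
    have := norm_sub_norm_le b.2 a.2
    have h2 : ‖b.2 - a.2‖ = ‖a.2 - b.2‖ := norm_sub_rev _ _
    linarith
  have : (ρ - α) ^ 2 ≤ ‖a.2 - b.2‖ ^ 2 := pow_le_pow_left₀ hρα0 hle 2
  linarith
end
end

section
/- Let K ⊂ V₊ be compact in the open forward light cone. Then for all sufficiently large s, the set A_s := { x : x₀ > 0, τ₁ ≤ √(x₀² − |x|²) ≤ τ₂, sR − r ≤ |x| ≤ s R̄ + r } lies in the spacelike complement of K, i.e., every a ∈ A_s and k ∈ K satisfy (a₀ − k₀)² < |a − k|². -/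
noncomputable section

/-- The open forward light cone `V₊`. -/
def lightCone : Set (ℝ × E3) := {x | ‖x.2‖ < x.1}

set_option maxHeartbeats 800000 in
/-- For a compact set `K ⊂ V₊` and constants `τ₂ ≥ τ₁ > 0`, `R̄ ≥ R > 0`, `r ≥ 0`,
the set `A_s = {x : x₀ > 0, τ₁ ≤ √(x₀² − |x|²) ≤ τ₂, sR − r ≤ |x| ≤ sR̄ + r}` lies
for all sufficiently large `s` in the spacelike complement of `K`: every `a ∈ A_s`
and `k ∈ K` satisfy `(a₀ − k₀)² < |a − k|²`. -/
theorem shifted_support_spacelike_to_compact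
    (τ₁ τ₂ r R Rbar : ℝ) (hτ₁ : 0 < τ₁) (hτ : τ₁ ≤ τ₂) (hr : 0 ≤ r)
    (hR : 0 < R) (hRbar : R ≤ Rbar)
    (K : Set (ℝ × E3)) (hK : IsCompact K) (hKV : K ⊆ lightCone) :
    ∃ s₀ : ℝ, ∀ s : ℝ, s₀ ≤ s →
      ∀ a ∈ {x : ℝ × E3 | 0 < x.1 ∧
          τ₁ ≤ Real.sqrt (x.1 ^ 2 - ‖x.2‖ ^ 2) ∧
          Real.sqrt (x.1 ^ 2 - ‖x.2‖ ^ 2) ≤ τ₂ ∧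
          s * R - r ≤ ‖x.2‖ ∧ ‖x.2‖ ≤ s * Rbar + r},
        ∀ k ∈ K, (a.1 - k.1) ^ 2 < ‖a.2 - k.2‖ ^ 2 := by
  rcases K.eq_empty_or_nonempty with hKe | hKne
  · exact ⟨0, fun s _ a _ k hk => by simp [hKe] at hk⟩
  have hcont : Continuous fun k : ℝ × E3 => k.1 - ‖k.2‖ := by continuity
  obtain ⟨p, hpK, hmin⟩ := hK.exists_isMinOn hKne hcont.continuousOn
  obtain ⟨δ, hδdef⟩ : ∃ d : ℝ, d = p.1 - ‖p.2‖ := ⟨_, rfl⟩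
  have hδpos : 0 < δ := hδdef ▸ sub_pos.mpr (hKV hpK)
  obtain ⟨q, hqK, hmax⟩ := hK.exists_isMaxOn hKne continuous_fst.continuousOn
  obtain ⟨M, hMdef⟩ : ∃ m : ℝ, m = q.1 := ⟨_, rfl⟩
  have hMpos : 0 < M := hMdef ▸ lt_of_le_of_lt (norm_nonneg q.2) (hKV hqK)
  obtain ⟨C, hCdef⟩ : ∃ c : ℝ, c = max (M + 1) (τ₂ ^ 2 / δ) := ⟨_, rfl⟩
  refine ⟨(C + r) / R, fun s hs a ha k hk => ?_⟩
  obtain ⟨ha0, haτ₁, haτ₂, haR, _⟩ := ha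
  -- bounds from K
  have hkδ : ‖k.2‖ + δ ≤ k.1 := by
    have h := hmin hk
    simp only [Set.mem_setOf_eq] at h
    rw [hδdef]
    linarith
  have hkM : k.1 ≤ M := hMdef ▸ hmax hk
  have hk2 : (0:ℝ) ≤ ‖k.2‖ := norm_nonneg _
  -- lower bound on ‖a.2‖
  have hna : C ≤ ‖a.2‖ := by
    have h1 : C + r ≤ s * R := by
      rw [div_le_iff₀ hR] at hs
      linarith
    linarith
  have hCM : M + 1 ≤ C := hCdef ▸ le_max_left _ _
  have hCτ : τ₂ ^ 2 / δ ≤ C := hCdef ▸ le_max_right _ _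
  have hna0 : 0 < ‖a.2‖ := by linarith
  -- timelike bounds on a
  have hy0 : 0 ≤ a.1 ^ 2 - ‖a.2‖ ^ 2 := by
    by_contra h
    have h0 : Real.sqrt (a.1 ^ 2 - ‖a.2‖ ^ 2) = 0 :=
      Real.sqrt_eq_zero'.mpr (not_le.mp h).le
    rw [h0] at haτ₁
    linarith
  have hsq : Real.sqrt (a.1 ^ 2 - ‖a.2‖ ^ 2) ^ 2 = a.1 ^ 2 - ‖a.2‖ ^ 2 :=
    Real.sq_sqrt hy0
  have hsnn : 0 ≤ Real.sqrt (a.1 ^ 2 - ‖a.2‖ ^ 2) := Real.sqrt_nonneg _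
  have hyτ₂ : a.1 ^ 2 - ‖a.2‖ ^ 2 ≤ τ₂ ^ 2 := by nlinarith
  have ha1ge : ‖a.2‖ ≤ a.1 := by nlinarith
  -- upper bound on a.1
  obtain ⟨ε, hεdef⟩ : ∃ e : ℝ, e = τ₂ ^ 2 / (2 * ‖a.2‖) := ⟨_, rfl⟩
  have h2δ : τ₂ ^ 2 ≤ ‖a.2‖ * δ := by
    rw [← div_le_iff₀ hδpos]
    linarith
  have hεδ : ε < δ := by
    rw [hεdef, div_lt_iff₀ (by linarith : (0:ℝ) < 2 * ‖a.2‖)]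
    nlinarith [mul_pos hδpos hna0, h2δ]
  have hprod : 2 * ‖a.2‖ * ε = τ₂ ^ 2 := by
    rw [hεdef]; field_simp
  have hεnn : 0 ≤ ε := by rw [hεdef]; positivity
  have ha1le : a.1 ≤ ‖a.2‖ + ε := by
    nlinarith [hyτ₂, hprod, ha0, hεnn, hna0, sq_nonneg ε, sq_nonneg (a.1 - ‖a.2‖ - ε)]
  -- norm lower bound
  have hnd : ‖a.2‖ - ‖k.2‖ ≤ ‖a.2 - k.2‖ := norm_sub_norm_le _ _
  have hnd0 : 0 ≤ ‖a.2 - k.2‖ := norm_nonneg _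
  -- combine
  have h1 : a.1 - k.1 < ‖a.2 - k.2‖ := by linarith
  have h2 : -‖a.2 - k.2‖ < a.1 - k.1 := by linarith
  exact sq_lt_sq' h2 h1
end
end

section
/- For unit vectors n, e_y, e_x in ℝ³ and |x| ≥ r > 0 with √(1 − (e_y·e_x)²) ≤ r/|x|, one has 1 − (e_y·n)² ≤ (1 − (n·e_x)²) + r/|x|. -/
noncomputable section

open scoped RealInnerProductSpace

private theorem core_estimate (a b c s u : ℝ) (ha : 0 ≤ a) (hb : 0 ≤ b) (hs : 0 ≤ s) (hu : 0 ≤ u)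
    (hs2 : s^2 = 1 - a^2) (hu2 : u^2 = 1 - b^2)
    (key : (c - a*b)^2 ≤ s^2 * u^2) :
    b^2 - c^2 ≤ s := by
  by_cases hsb : b^2 ≤ s
  · nlinarith [sq_nonneg c]
  · push_neg at hsb
    have hb1 : b ≤ 1 := by nlinarith
    have hsb' : s < b := by nlinarith
    have hau : u < a := by nlinarith
    have hd : |c - a*b| ≤ s*u := by
      rw [← Real.sqrt_sq_eq_abs]
      calc Real.sqrt ((c-a*b)^2) ≤ Real.sqrt (s^2*u^2) := Real.sqrt_le_sqrt key
        _ = s*u := by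
            rw [show s^2*u^2 = (s*u)^2 by ring, Real.sqrt_sq (mul_nonneg hs hu)]
    have hc : a*b - s*u ≤ c := by
      have := (abs_le.mp hd).1; linarith
    have hc0 : 0 ≤ a*b - s*u := by nlinarith
    have hc2 : (a*b - s*u)^2 ≤ c^2 := by
      apply sq_le_sq' <;> nlinarith
    have h1 : s^2 + a^2 = 1 := by linarith
    have h2 : (1-2*u^2)^2 + (2*b*u)^2 = 1 := by linear_combination (4*u^2) * hu2
    have hBsq : (s*(1-2*u^2)+2*a*b*u)^2 ≤ (s^2+a^2)*((1-2*u^2)^2+(2*b*u)^2) := by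
      nlinarith [sq_nonneg (s*(2*b*u) - a*(1-2*u^2))]
    rw [h1, h2] at hBsq
    have hB : s*(1-2*u^2) + 2*a*b*u ≤ 1 := by
      nlinarith [sq_nonneg (s*(1-2*u^2)+2*a*b*u - 1)]
    nlinarith [mul_le_mul_of_nonneg_left hB hs]

/-- Elementary geometric estimate (A.8): for unit vectors `n, e_y` and
`x` with `|x| ≥ r > 0`, if `√(1 − (e_y·e_x)²) ≤ r/|x|` with `e_x = x/|x|`,
then `1 − (e_y·n)² ≤ (1 − (n·e_x)²) + r/|x|`. -/
theorem transverse_defect_estimate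
    (n ey x : E3) (r : ℝ) (hr : 0 < r) (hx : r ≤ ‖x‖)
    (hn : ‖n‖ = 1) (hey : ‖ey‖ = 1)
    (h : Real.sqrt (1 - ⟪ey, (‖x‖)⁻¹ • x⟫ ^ 2) ≤ r / ‖x‖) :
    1 - ⟪ey, n⟫ ^ 2 ≤ (1 - ⟪n, (‖x‖)⁻¹ • x⟫ ^ 2) + r / ‖x‖ := by
  have hx0 : (0:ℝ) < ‖x‖ := lt_of_lt_of_le hr hx
  set ex : E3 := (‖x‖)⁻¹ • x with hexdef
  have hexn : ‖ex‖ = 1 := by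
    rw [hexdef, norm_smul, norm_inv, norm_norm, inv_mul_cancel₀ hx0.ne']
  set a : ℝ := ⟪ey, ex⟫ with hadef
  set b : ℝ := ⟪n, ex⟫ with hbdef
  set c : ℝ := ⟪ey, n⟫ with hcdef
  -- basic bounds
  have ha1 : a^2 ≤ 1 := by
    have := abs_real_inner_le_norm ey ex
    rw [hey, hexn, mul_one] at this
    nlinarith [abs_nonneg a, sq_abs a]
  have hb1 : b^2 ≤ 1 := by
    have := abs_real_inner_le_norm n ex
    rw [hn, hexn, mul_one] at this
    nlinarith [abs_nonneg b, sq_abs b]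
  -- inner product computations
  have hxx : ⟪ex, ex⟫ = (1:ℝ) := by
    rw [real_inner_self_eq_norm_sq, hexn]; norm_num
  have heyey : ⟪ey, ey⟫ = (1:ℝ) := by
    rw [real_inner_self_eq_norm_sq, hey]; norm_num
  have hnn : ⟪n, n⟫ = (1:ℝ) := by
    rw [real_inner_self_eq_norm_sq, hn]; norm_num
  -- Cauchy–Schwarz on the components orthogonal to ex
  have key0 : (c - a*b)^2 ≤ (1 - a^2) * (1 - b^2) := by
    have hcs := real_inner_mul_inner_self_le (ey - a • ex) (n - b • ex)
    have e1 : ⟪ey - a • ex, n - b • ex⟫ = c - a*b := by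
      simp only [inner_sub_left, inner_sub_right, real_inner_smul_left,
        real_inner_smul_right, hxx]
      rw [real_inner_comm n ex, ← hbdef, ← hadef, ← hcdef]; ring
    have e2 : ⟪ey - a • ex, ey - a • ex⟫ = 1 - a^2 := by
      simp only [inner_sub_left, inner_sub_right, real_inner_smul_left,
        real_inner_smul_right, hxx, heyey]
      rw [real_inner_comm ey ex, ← hadef]; ring
    have e3 : ⟪n - b • ex, n - b • ex⟫ = 1 - b^2 := by
      simp only [inner_sub_left, inner_sub_right, real_inner_smul_left,
        real_inner_smul_right, hxx, hnn]
      rw [real_inner_comm n ex, ← hbdef]; ring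
    rw [e1, e2, e3] at hcs
    nlinarith [hcs]
  -- set up sines
  set s : ℝ := Real.sqrt (1 - a^2) with hsdef
  set u : ℝ := Real.sqrt (1 - b^2) with hudef
  have hs0 : 0 ≤ s := Real.sqrt_nonneg _
  have hu0 : 0 ≤ u := Real.sqrt_nonneg _
  have hs2 : s^2 = 1 - a^2 := Real.sq_sqrt (by linarith)
  have hu2 : u^2 = 1 - b^2 := Real.sq_sqrt (by linarith)
  have key : (c - a*b)^2 ≤ s^2 * u^2 := by rw [hs2, hu2]; exact key0
  -- reduce to the core estimate with nonnegative a, b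
  have main : b^2 - c^2 ≤ s := by
    rcases le_or_gt 0 (a*b) with hab | hab
    · have key' : (c - |a| * |b|)^2 ≤ s^2 * u^2 := by
        rwa [← abs_mul, abs_of_nonneg hab]
      have := core_estimate |a| |b| c s u (abs_nonneg a) (abs_nonneg b) hs0 hu0
        (by rw [sq_abs]; exact hs2) (by rw [sq_abs]; exact hu2) key'
      rwa [sq_abs] at this
    · have key' : ((-c) - |a| * |b|)^2 ≤ s^2 * u^2 := by
        rw [← abs_mul, abs_of_neg hab]
        convert key using 1; ring
      have := core_estimate |a| |b| (-c) s u (abs_nonneg a) (abs_nonneg b) hs0 hu0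
        (by rw [sq_abs]; exact hs2) (by rw [sq_abs]; exact hu2) key'
      rw [sq_abs] at this
      nlinarith [this]
  have hst : s ≤ r / ‖x‖ := h
  calc 1 - c^2 = (1 - b^2) + (b^2 - c^2) := by ring
    _ ≤ (1 - b^2) + s := by linarith
    _ ≤ (1 - b^2) + r / ‖x‖ := by linarith
end
end

section
/- For real p·l > 0 and a timelike vector a, the asymptotic radiation integral satisfies the bound |∫₁^∞ du ((l − u⁻² a) e^{i p·(u l + u⁻¹ a)} − l e^{i u p·l})| ≤ (|a| + 4|l||p·a|²) + |l||p·a| |∫_{p·l}^∞ u⁻¹ e^{iu} du|, where the last (oscillatory) integral converges for p·l > 0 and diverges at most logarithmically as p·l → 0⁺. -/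
noncomputable section

open Filter

abbrev E4 : Type := EuclideanSpace ℝ (Fin 4)
abbrev C4 : Type := EuclideanSpace ℂ (Fin 4)

/-- The Minkowski pairing `p·q = p₀q₀ − 𝐩·𝐪` on `ℝ⁴`. -/
def mink (p q : E4) : ℝ := p 0 * q 0 - ∑ i : Fin 3, p i.succ * q i.succ

/-- Complexification of a real 4-vector. -/
def cpx (v : E4) : C4 := (WithLp.equiv 2 (Fin 4 → ℂ)).symm fun μ => (v μ : ℂ)

/-!
Write `α = p·l > 0`, `β = p·a` and `θ(u) = uα + β/u`. The integrand is
`(e^{iθ} − e^{iuα}) l − u⁻² e^{iθ} a`. The coefficient of `a` has modulus `u⁻²`, whose integral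
over `(1, ∞)` is `1`. For the coefficient of `l`,
`e^{iθ} − e^{iuα} = e^{iuα} (e^{iβ/u} − 1 − iβ/u) + iβ u⁻¹ e^{iuα}`: the first term is bounded by
`β² u⁻²`, and the substitution `v = αu` turns the integral of the second over `(1, T)` into
`iβ ∫_α^{αT} v⁻¹ e^{iv} dv`, which converges (to `iβ J`) after one integration by parts.
Since `∫₁^∞ u⁻² du = 1`, this gives the bound with `β²` in place of `4β²`.
-/

open MeasureTheory Set intervalIntegral Complex Topology

lemma norm_cpx (v : E4) : ‖cpx v‖ = ‖v‖ := by
  simp [EuclideanSpace.norm_eq, cpx, WithLp.equiv_symm_apply]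

lemma cpx_sub_smul (l a : E4) (c : ℝ) : cpx (l - c • a) = cpx l - (c : ℂ) • cpx a := by
  ext μ
  simp [cpx, WithLp.equiv_symm_apply]

lemma mink_add_smul (p l a : E4) (u v : ℝ) :
    mink p (u • l + v • a) = u * mink p l + v * mink p a := by
  simp only [mink, PiLp.add_apply, PiLp.smul_apply, smul_eq_mul, Fin.sum_univ_three]
  ring

lemma norm_exp_I_mul_sub_one_sub_le (θ : ℝ) : ‖cexp (I * θ) - 1 - I * θ‖ ≤ θ ^ 2 := by
  have hderiv (t : ℝ) :
      HasDerivAt (fun t : ℝ => cexp (I * t) - 1 - I * t) (I * (cexp (I * t) - 1)) t := by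
    have h : HasDerivAt (fun t : ℝ => I * t) I t := by
      simpa using (hasDerivAt_id t).ofReal_comp.const_mul I
    exact ((h.cexp.sub_const 1).sub h).congr_deriv (by ring)
  have hbound : ∀ t ∈ Metric.closedBall (0 : ℝ) |θ|, ‖I * (cexp (I * t) - 1)‖ ≤ |θ| := by
    intro t ht
    rw [norm_mul, norm_I, one_mul]
    exact Real.norm_exp_I_mul_ofReal_sub_one_le.trans (by simpa using ht)
  have := (convex_closedBall (0 : ℝ) |θ|).norm_image_sub_le_of_norm_hasDerivWithin_le
    (fun t _ => (hderiv t).hasDerivWithinAt) hbound (Metric.mem_closedBall_self (abs_nonneg θ))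
    (by simp : θ ∈ Metric.closedBall (0 : ℝ) |θ|)
  simpa [sq_abs, sq] using this

section ImproperIntegral

variable {E : Type*} [NormedAddCommGroup E] [NormedSpace ℝ E]

theorem exists_tendsto_integral_of_norm_le_div_sq {f : ℝ → E} {c C : ℝ} (hc : 0 < c)
    (hf : ContinuousOn f (Ici c)) (hbound : ∀ u, c < u → ‖f u‖ ≤ C / u ^ 2) :
    ∃ I : E, Tendsto (fun T => ∫ u in c..T, f u) atTop (𝓝 I) ∧ ‖I‖ ≤ C / c := by
  have hg : IntegrableOn (fun u => C * u ^ (-2 : ℝ)) (Ioi c) :=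
    (integrableOn_Ioi_rpow_of_lt (by norm_num) hc).const_mul C
  have hbound' : ∀ᵐ u ∂volume.restrict (Ioi c), ‖f u‖ ≤ C * u ^ (-2 : ℝ) := by
    filter_upwards [ae_restrict_mem measurableSet_Ioi] with u hu
    rw [Real.rpow_neg (hc.trans hu).le, ← div_eq_mul_inv]
    exact_mod_cast hbound u hu
  have hfi : IntegrableOn f (Ioi c) :=
    hg.mono' ((hf.mono Ioi_subset_Ici_self).aestronglyMeasurable measurableSet_Ioi) hbound'
  refine ⟨∫ u in Ioi c, f u, intervalIntegral_tendsto_integral_Ioi c hfi tendsto_id, ?_⟩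
  calc ‖∫ u in Ioi c, f u‖ ≤ ∫ u in Ioi c, C * u ^ (-2 : ℝ) :=
        norm_integral_le_of_norm_le hg hbound'
    _ = C / c := by
        rw [MeasureTheory.integral_const_mul, integral_Ioi_rpow_of_lt (by norm_num) hc]
        norm_num [div_eq_mul_inv, Real.rpow_neg_one]

theorem tendsto_integral_add_of_continuousOn {f g : ℝ → E} {a : ℝ} {F G : E}
    (hf : ContinuousOn f (Ici a)) (hg : ContinuousOn g (Ici a))
    (hF : Tendsto (fun T => ∫ u in a..T, f u) atTop (𝓝 F))
    (hG : Tendsto (fun T => ∫ u in a..T, g u) atTop (𝓝 G)) :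
    Tendsto (fun T => ∫ u in a..T, f u + g u) atTop (𝓝 (F + G)) := by
  refine (hF.add hG).congr' ?_
  filter_upwards [eventually_ge_atTop a] with T hT
  have hsub : uIcc a T ⊆ Ici a := by rw [uIcc_of_le hT]; exact Icc_subset_Ici_self
  exact (integral_add (hf.mono hsub).intervalIntegrable (hg.mono hsub).intervalIntegrable).symm

end ImproperIntegral

lemma hasDerivAt_exp_I_mul_div_I_mul {v : ℝ} (hv : v ≠ 0) :
    HasDerivAt (fun v : ℝ => cexp (I * v) / (I * v))
      ((v : ℂ)⁻¹ * cexp (I * v) + I * ((v : ℂ) ^ 2)⁻¹ * cexp (I * v)) v := by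
  have hv' : (v : ℂ) ≠ 0 := by exact_mod_cast hv
  have h : HasDerivAt (fun t : ℝ => I * t) I v := by
    simpa using (hasDerivAt_id v).ofReal_comp.const_mul I
  refine (h.cexp.div h (mul_ne_zero I_ne_zero hv')).congr_deriv ?_
  field_simp
  ring_nf
  simp only [I_sq]
  ring

/-- `e^{iv}/(iv)` is a primitive of `v⁻¹ e^{iv}` up to the absolutely integrable `i v⁻² e^{iv}`,
and it tends to `0`. -/
theorem exists_tendsto_integral_inv_mul_exp_I {c : ℝ} (hc : 0 < c) :
    ∃ J : ℂ, Tendsto (fun T : ℝ => ∫ v in c..T, (v : ℂ)⁻¹ * cexp (I * v)) atTop (𝓝 J) := by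
  set G : ℝ → ℂ := fun v => cexp (I * v) / (I * v)
  set g : ℝ → ℂ := fun v => I * ((v : ℂ) ^ 2)⁻¹ * cexp (I * v)
  have hF : ContinuousOn (fun v : ℝ => (v : ℂ)⁻¹ * cexp (I * v)) (Ici c) := by
    fun_prop (disch := intros; simp_all; linarith)
  have hg : ContinuousOn g (Ici c) := by fun_prop (disch := intros; simp_all; linarith)
  obtain ⟨K, hK, -⟩ := exists_tendsto_integral_of_norm_le_div_sq (C := 1) hc hg fun u hu => by
    simp [g, norm_exp_I_mul_ofReal, div_eq_mul_inv]
  have hG : Tendsto G atTop (𝓝 0) := by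
    refine squeeze_zero_norm' ?_ tendsto_inv_atTop_zero
    filter_upwards [eventually_gt_atTop 0] with T hT
    simp [G, norm_exp_I_mul_ofReal, abs_of_pos hT]
  refine ⟨0 - G c - K, ((hG.sub_const (G c)).sub hK).congr' ?_⟩
  filter_upwards [eventually_ge_atTop c] with T hT
  have hsub : uIcc c T ⊆ Ici c := by rw [uIcc_of_le hT]; exact Icc_subset_Ici_self
  have hFi := (hF.mono hsub).intervalIntegrable (μ := volume)
  have hgi := (hg.mono hsub).intervalIntegrable (μ := volume)
  rw [← integral_eq_sub_of_hasDerivAt (fun v hv => hasDerivAt_exp_I_mul_div_I_mul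
    (hc.trans_le (hsub hv)).ne') (hFi.add hgi), integral_add hFi hgi, add_sub_cancel_right]

theorem integral_inv_mul_comp_mul_left (f : ℝ → ℂ) {c : ℝ} (hc : c ≠ 0) (a b : ℝ) :
    ∫ x in a..b, (x : ℂ)⁻¹ * f (c * x) = ∫ x in c * a..c * b, (x : ℂ)⁻¹ * f x := by
  have hc' : (c : ℂ) ≠ 0 := by exact_mod_cast hc
  have h (x : ℝ) : (x : ℂ)⁻¹ * f (c * x) = c • (((c * x : ℝ) : ℂ)⁻¹ * f (c * x)) := by
    rw [Complex.real_smul, ofReal_mul, mul_inv, ← mul_assoc, ← mul_assoc, mul_inv_cancel₀ hc',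
      one_mul]
  simp_rw [h, intervalIntegral.integral_smul, intervalIntegral.integral_comp_mul_left
    (fun x : ℝ => (x : ℂ)⁻¹ * f x) hc, smul_inv_smul₀ hc]

section Phase

variable {α β : ℝ}

theorem exists_tendsto_integral_exp_I_mul_add_inv_div_sq :
    ∃ A : ℂ, Tendsto (fun T : ℝ => ∫ u in (1 : ℝ)..T,
        -cexp (I * ↑(u * α + u⁻¹ * β)) / (u : ℂ) ^ 2) atTop (𝓝 A) ∧ ‖A‖ ≤ 1 := by
  obtain ⟨A, hA, hAle⟩ := exists_tendsto_integral_of_norm_le_div_sq (C := 1) one_pos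
    (f := fun u : ℝ => -cexp (I * ↑(u * α + u⁻¹ * β)) / (u : ℂ) ^ 2)
    (by fun_prop (disch := intros; simp_all; linarith)) fun u _ => by
      rw [norm_div, norm_neg, norm_exp_I_mul_ofReal]; simp
  exact ⟨A, hA, by simpa using hAle⟩

theorem exists_tendsto_integral_exp_I_mul_add_inv_sub_exp_I_mul (hα : 0 < α) {J : ℂ}
    (hJ : Tendsto (fun T : ℝ => ∫ v in α..T, (v : ℂ)⁻¹ * cexp (I * v)) atTop (𝓝 J)) :
    ∃ L : ℂ, Tendsto (fun T : ℝ => ∫ u in (1 : ℝ)..T,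
        (cexp (I * ↑(u * α + u⁻¹ * β)) - cexp (I * ↑(u * α)))) atTop (𝓝 L) ∧
      ‖L‖ ≤ β ^ 2 + |β| * ‖J‖ := by
  set ψ : ℝ → ℂ := fun u => cexp (I * ↑(u * α)) * (cexp (I * ↑(u⁻¹ * β)) - 1 - I * ↑(u⁻¹ * β))
  set χ : ℝ → ℂ := fun u => I * β * ((u : ℂ)⁻¹ * cexp (I * ↑(α * u)))
  have hsplit (u : ℝ) : cexp (I * ↑(u * α + u⁻¹ * β)) - cexp (I * ↑(u * α)) = ψ u + χ u := by
    simp only [ψ, χ, ofReal_add, mul_add, exp_add, mul_comm α u]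
    push_cast
    ring
  have hψcont : ContinuousOn ψ (Ici 1) := by fun_prop (disch := intros; simp_all; linarith)
  have hχcont : ContinuousOn χ (Ici 1) := by fun_prop (disch := intros; simp_all; linarith)
  obtain ⟨Ψ, hΨ, hΨle⟩ := exists_tendsto_integral_of_norm_le_div_sq (C := β ^ 2) one_pos hψcont
    fun u _ => calc
      ‖ψ u‖ = ‖cexp (I * ↑(u⁻¹ * β)) - 1 - I * ↑(u⁻¹ * β)‖ := by
        rw [norm_mul, norm_exp_I_mul_ofReal, one_mul]
      _ ≤ (u⁻¹ * β) ^ 2 := norm_exp_I_mul_sub_one_sub_le _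
      _ = β ^ 2 / u ^ 2 := by ring
  have hχ : Tendsto (fun T : ℝ => ∫ u in (1 : ℝ)..T, χ u) atTop (𝓝 (I * β * J)) := by
    simp_rw [χ, intervalIntegral.integral_const_mul,
      integral_inv_mul_comp_mul_left (fun v => cexp (I * v)) hα.ne', mul_one]
    exact (hJ.comp (tendsto_id.const_mul_atTop hα)).const_mul _
  refine ⟨Ψ + I * β * J, ?_, ?_⟩
  · simp_rw [hsplit]
    exact tendsto_integral_add_of_continuousOn hψcont hχcont hΨ hχ
  · calc ‖Ψ + I * β * J‖ ≤ ‖Ψ‖ + ‖I * β * J‖ := norm_add_le _ _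
      _ ≤ β ^ 2 + |β| * ‖J‖ := by
        gcongr
        · simpa using hΨle
        · simp

end Phase

theorem radiation_integrand_eq (p l a : E4) (u : ℝ) :
    cexp (I * ↑(mink p (u • l + u⁻¹ • a))) • cpx (l - (u ^ 2)⁻¹ • a)
        - cexp (I * ↑(u * mink p l)) • cpx l
      = (cexp (I * ↑(u * mink p l + u⁻¹ * mink p a)) - cexp (I * ↑(u * mink p l))) • cpx l
        + (-cexp (I * ↑(u * mink p l + u⁻¹ * mink p a)) / (u : ℂ) ^ 2) • cpx a := by
  rw [mink_add_smul, cpx_sub_smul]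
  push_cast
  module

theorem radiation_integral_bound_general (p l a : E4)
    (hpl : 0 < mink p l) :
    ∃ (I₀ : C4) (J : ℂ),
      Tendsto (fun T : ℝ => ∫ u in (1:ℝ)..T,
          (Complex.exp (Complex.I * (mink p (u • l + u⁻¹ • a) : ℝ)) •
              cpx (l - (u ^ 2)⁻¹ • a)
            - Complex.exp (Complex.I * ((u * mink p l : ℝ))) • cpx l))
        atTop (nhds I₀) ∧
      Tendsto (fun T : ℝ => ∫ u in (mink p l)..T,
          (u : ℂ)⁻¹ * Complex.exp (Complex.I * (u : ℝ))) atTop (nhds J) ∧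
      ‖I₀‖ ≤ (‖a‖ + 4 * ‖l‖ * (mink p a) ^ 2) + ‖l‖ * |mink p a| * ‖J‖ := by
  obtain ⟨J, hJ⟩ := exists_tendsto_integral_inv_mul_exp_I hpl
  obtain ⟨L, hL, hLle⟩ :=
    exists_tendsto_integral_exp_I_mul_add_inv_sub_exp_I_mul (β := mink p a) hpl hJ
  obtain ⟨A, hA, hAle⟩ :=
    exists_tendsto_integral_exp_I_mul_add_inv_div_sq (α := mink p l) (β := mink p a)
  refine ⟨L • cpx l + A • cpx a, J, ?_, hJ, ?_⟩
  · simp_rw [radiation_integrand_eq]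
    refine tendsto_integral_add_of_continuousOn ?_ ?_
      (by simpa using hL.smul_const (cpx l)) (by simpa using hA.smul_const (cpx a)) <;>
    fun_prop (disch := intros; simp_all; linarith)
  · set β := mink p a
    calc ‖L • cpx l + A • cpx a‖ ≤ ‖L‖ * ‖l‖ + ‖A‖ * ‖a‖ := by
          simpa [norm_smul, norm_cpx] using norm_add_le (L • cpx l) (A • cpx a)
      _ ≤ (β ^ 2 + |β| * ‖J‖) * ‖l‖ + 1 * ‖a‖ := by gcongr
      _ ≤ (‖a‖ + 4 * ‖l‖ * β ^ 2) + ‖l‖ * |β| * ‖J‖ := by nlinarith [norm_nonneg l, sq_nonneg β]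

/-- Bound on the asymptotic radiation integral: for `p·l > 0` and timelike `a`,
the improper integral `∫₁^∞ ((l − u⁻²a) e^{ip·(ul + u⁻¹a)} − l e^{iu p·l}) du`
converges (as the limit of `∫₁^T`), the oscillatory integral `∫_{p·l}^∞ u⁻¹e^{iu} du`
converges, and
`‖∫₁^∞ …‖ ≤ (|a| + 4|l||p·a|²) + |l||p·a| |∫_{p·l}^∞ u⁻¹ e^{iu} du|`. -/
theorem radiation_integral_bound (p l a : E4)
    (hpl : 0 < mink p l) (ha : 0 < mink a a) :
    ∃ (I₀ : C4) (J : ℂ),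
      Tendsto (fun T : ℝ => ∫ u in (1:ℝ)..T,
          (Complex.exp (Complex.I * (mink p (u • l + u⁻¹ • a) : ℝ)) •
              cpx (l - (u ^ 2)⁻¹ • a)
            - Complex.exp (Complex.I * ((u * mink p l : ℝ))) • cpx l))
        atTop (nhds I₀) ∧
      Tendsto (fun T : ℝ => ∫ u in (mink p l)..T,
          (u : ℂ)⁻¹ * Complex.exp (Complex.I * (u : ℝ))) atTop (nhds J) ∧
      ‖I₀‖ ≤ (‖a‖ + 4 * ‖l‖ * (mink p a) ^ 2) + ‖l‖ * |mink p a| * ‖J‖ :=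
  radiation_integral_bound_general p l a hpl
end
end
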